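/- arXiv:1603.08134 — 7 statements merged into one kernel-verified Lean document; each statement's English description precedes it below -/
import Mathlib

section
/- Let X be a compact topological space and F ⊆ C(X) a uniformly bounded family of continuous real-valued functions. Then F contains an independent sequence if and only if F contains a strongly independent sequence (i.e., for continuous functions on a compact space, independence with respect to finite disjoint index sets is equivalent to independence with respect to infinite disjoint index sets). -/
/-!
Infinite index sets are harder to separate than finite ones, since every pair of disjoint finite
sets extends to a pair of disjoint infinite sets (add the even, resp. odd, numbers not already
used by the other set). Conversely, on a compact space the sets `{f n ≤ s}` for `n ∈ P` and
`{r ≤ f n}` for `n ∈ M` are closed and, by independence, have the finite intersection property,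
so they have a common point; shrinking `[s, r]` to a smaller interval restores the strict
inequalities.
-/

open Filter Topology

/-- A sequence of real functions is independent: for some `s < r`, all finite
disjoint index sets can be separated. -/
def IndepSeq {X : Type*} (f : ℕ → X → ℝ) : Prop :=
  ∃ s r : ℝ, s < r ∧ ∀ P M : Finset ℕ, Disjoint P M →
    ∃ x : X, (∀ n ∈ P, f n x < s) ∧ (∀ n ∈ M, r < f n x)

/-- A sequence of real functions is strongly independent: for some `s < r`, all
infinite disjoint index sets can be separated. -/
def StrongIndepSeq {X : Type*} (f : ℕ → X → ℝ) : Prop :=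
  ∃ s r : ℝ, s < r ∧ ∀ P M : Set ℕ, P.Infinite → M.Infinite → Disjoint P M →
    ∃ x : X, (∀ n ∈ P, f n x < s) ∧ (∀ n ∈ M, r < f n x)

section

variable {X : Type*} {f : ℕ → X → ℝ}

theorem StrongIndepSeq.indepSeq (hf : StrongIndepSeq f) : IndepSeq f := by
  obtain ⟨s, r, hsr, hsep⟩ := hf
  refine ⟨s, r, hsr, fun P M hPM => ?_⟩
  have hdbl : Function.Injective (2 * · : ℕ → ℕ) := fun a b h => by simpa using h
  have hdbl₁ : Function.Injective (2 * · + 1 : ℕ → ℕ) := fun a b h => by simpa using h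
  obtain ⟨x, hxP, hxM⟩ := hsep (↑P ∪ (Set.range (2 * ·) \ ↑M)) (↑M ∪ (Set.range (2 * · + 1) \ ↑P))
    (((Set.infinite_range_of_injective hdbl).sdiff M.finite_toSet).mono Set.subset_union_right)
    (((Set.infinite_range_of_injective hdbl₁).sdiff P.finite_toSet).mono Set.subset_union_right)
    (by
      rw [Set.disjoint_left]
      rintro n (hnP | ⟨⟨a, rfl⟩, hnM⟩) (hnM' | ⟨⟨b, hb⟩, hnP'⟩)
      exacts [Finset.disjoint_left.1 hPM hnP hnM', hnP' hnP, hnM hnM', by simp only at hb; omega])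
  exact ⟨x, fun n hn => hxP n (Or.inl hn), fun n hn => hxM n (Or.inl hn)⟩

theorem exists_forall_le_forall_ge_of_finset [TopologicalSpace X] [CompactSpace X]
    (hf : ∀ n, Continuous (f n)) {s r : ℝ}
    (hsep : ∀ P M : Finset ℕ, Disjoint P M →
      ∃ x, (∀ n ∈ P, f n x < s) ∧ (∀ n ∈ M, r < f n x))
    {P M : Set ℕ} (hPM : Disjoint P M) :
    ∃ x, (∀ n ∈ P, f n x ≤ s) ∧ (∀ n ∈ M, r ≤ f n x) := by
  classical
  let Z : ℕ → Set X := fun n => {x | n ∈ P → f n x ≤ s} ∩ {x | n ∈ M → r ≤ f n x}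
  have hZ : ∀ n, IsClosed (Z n) := fun n =>
    (isClosed_imp isOpen_const (isClosed_le (hf n) continuous_const)).inter
      (isClosed_imp isOpen_const (isClosed_le continuous_const (hf n)))
  have hfin : ∀ u : Finset ℕ, (⋂ n ∈ u, Z n).Nonempty := fun u => by
    obtain ⟨x, hxP, hxM⟩ :=
      hsep (u.filter (· ∈ P)) (u.filter (· ∈ M)) (Finset.disjoint_filter_filter' _ _ hPM)
    refine ⟨x, Set.mem_iInter₂.2 fun n hn => ⟨fun hnP => ?_, fun hnM => ?_⟩⟩
    · exact (hxP n (Finset.mem_filter.2 ⟨hn, hnP⟩)).le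
    · exact (hxM n (Finset.mem_filter.2 ⟨hn, hnM⟩)).le
  obtain ⟨x, hx⟩ := CompactSpace.iInter_nonempty hZ hfin
  rw [Set.mem_iInter] at hx
  exact ⟨x, fun n hn => (hx n).1 hn, fun n hn => (hx n).2 hn⟩

theorem IndepSeq.strongIndepSeq [TopologicalSpace X] [CompactSpace X]
    (hf : ∀ n, Continuous (f n)) (hind : IndepSeq f) : StrongIndepSeq f := by
  obtain ⟨s, r, hsr, hsep⟩ := hind
  refine ⟨(2 * s + r) / 3, (s + 2 * r) / 3, by linarith, fun P M _ _ hPM => ?_⟩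
  obtain ⟨x, hxP, hxM⟩ := exists_forall_le_forall_ge_of_finset hf hsep hPM
  exact ⟨x, fun n hn => by linarith [hxP n hn], fun n hn => by linarith [hxM n hn]⟩

end

theorem indep_iff_strongIndep_of_compact_general {X : Type*} [TopologicalSpace X]
    [CompactSpace X] (F : Set (X → ℝ))
    (hcont : ∀ f ∈ F, Continuous f) :
    (∃ g : ℕ → X → ℝ, (∀ n, g n ∈ F) ∧ IndepSeq g) ↔
    (∃ g : ℕ → X → ℝ, (∀ n, g n ∈ F) ∧ StrongIndepSeq g) :=
  ⟨fun ⟨g, hgF, hg⟩ => ⟨g, hgF, hg.strongIndepSeq fun n => hcont _ (hgF n)⟩,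
    fun ⟨g, hgF, hg⟩ => ⟨g, hgF, hg.indepSeq⟩⟩

/-- For a uniformly bounded family of continuous functions on a compact space,
containing an independent sequence is equivalent to containing a strongly
independent sequence. -/
theorem indep_iff_strongIndep_of_compact {X : Type*} [TopologicalSpace X]
    [CompactSpace X] (F : Set (X → ℝ)) (C : ℝ)
    (hcont : ∀ f ∈ F, Continuous f)
    (hbd : ∀ f ∈ F, ∀ x, |f x| ≤ C) :
    (∃ g : ℕ → X → ℝ, (∀ n, g n ∈ F) ∧ IndepSeq g) ↔
    (∃ g : ℕ → X → ℝ, (∀ n, g n ∈ F) ∧ StrongIndepSeq g) :=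
  indep_iff_strongIndep_of_compact_general F hcont
end

section
/- If a sequence (f_n) of real-valued functions on a set X contains no independent subsequence with constants s < r for any rationals s < r, and every countable intersection obstruction is witnessed finitely, then under compactness of X and continuity of the f_n, every sequence in the family has a pointwise convergent subsequence (Rosenthal's lemma, one direction): a uniformly bounded family F ⊆ C(X) on a compact space X with no independent subsequence has the property that each sequence in F has a subsequence converging pointwise on X. -/
open Filter Topology

open Set

/-!
For rationals `s < r` put `A n = {g n < s}` and `B n = {r < g n}`. Rosenthal's dichotomy: either
every infinite `M` contains an infinite `M'` along which no point lies in infinitely many `A n`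
and infinitely many `B n`, or some `M` fails this hereditarily. In the second case finitely many
hereditarily divergent sets can always be split by `A n` and `B n` at one common index `n`
without losing hereditary divergence (otherwise a pigeonhole argument along a fusion sequence
gives a contradiction); iterating the split, every cell of the first `k` splittings stays
nonempty, which is independence. So, with no independent subsequence, a diagonal argument over
the countably many rational gaps `s < r` yields a subsequence along which `g n x` never
oscillates across a rational gap; being bounded, it converges.
-/

theorem exists_seq_of_forall_exists_succ {α : Type*} {p : ℕ → α → Prop}
    {r : ℕ → α → α → Prop} {a : α} (ha : p 0 a) (h : ∀ k a, p k a → ∃ b, p (k + 1) b ∧ r k a b) :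
    ∃ s : ℕ → α, s 0 = a ∧ ∀ k, p k (s k) ∧ r k (s k) (s (k + 1)) := by
  choose! f hfp hfr using h
  let s : ℕ → α := fun k => Nat.rec a f k
  have hs : ∀ k, p k (s k) := fun k => by
    induction k with
    | zero => exact ha
    | succ k ih => exact hfp k _ ih
  exact ⟨s, rfl, fun k => ⟨hs k, hfr k _ (hs k)⟩⟩

def IsFusionSeq (N : ℕ → Set ℕ) (n : ℕ → ℕ) : Prop :=
  ∀ k, n k ∈ N k ∧ N (k + 1) ⊆ N k \ Iic (n k)

namespace IsFusionSeq

variable {N : ℕ → Set ℕ} {n : ℕ → ℕ}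

theorem antitone (h : IsFusionSeq N n) : Antitone N :=
  antitone_nat_of_succ_le fun k => (h k).2.trans sdiff_subset

theorem strictMono (h : IsFusionSeq N n) : StrictMono n :=
  strictMono_nat_of_lt_succ fun k => not_le.1 ((h k).2 (h (k + 1)).1).2

theorem finite_range_diff (h : IsFusionSeq N n) (k : ℕ) : (range n \ N k).Finite := by
  refine ((finite_lt_nat k).image n).subset ?_
  rintro _ ⟨⟨j, rfl⟩, hj⟩
  refine ⟨j, ?_, rfl⟩
  by_contra hkj
  exact hj (h.antitone (not_lt.1 hkj) (h j).1)

end IsFusionSeq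

section PairsOfSets

variable {X : Type*} (A B : ℕ → Set X)

def ConvergesOn (S : Set X) (M : Set ℕ) : Prop :=
  ∀ x ∈ S, {n ∈ M | x ∈ A n}.Finite ∨ {n ∈ M | x ∈ B n}.Finite

def DivergesHereditarily (S : Set X) (M : Set ℕ) : Prop :=
  ∀ M' ⊆ M, M'.Infinite → ¬ ConvergesOn A B S M'

def IsIndependent : Prop :=
  ∀ P Q : Finset ℕ, Disjoint P Q → ∃ x, (∀ i ∈ P, x ∈ A i) ∧ ∀ i ∈ Q, x ∈ B i

variable {A B} {S : Set X} {M : Set ℕ}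

theorem not_convergesOn_iff : ¬ ConvergesOn A B S M ↔
    ∃ x ∈ S, {n ∈ M | x ∈ A n}.Infinite ∧ {n ∈ M | x ∈ B n}.Infinite := by
  simp only [ConvergesOn, not_forall, not_or, Set.Infinite, exists_prop]

theorem not_divergesHereditarily_iff : ¬ DivergesHereditarily A B S M ↔
    ∃ M' ⊆ M, M'.Infinite ∧ ConvergesOn A B S M' := by
  simp only [DivergesHereditarily, not_forall, not_not, exists_prop]

theorem ConvergesOn.of_finite_diff {M' : Set ℕ} (h : ConvergesOn A B S M')
    (hM : (M \ M').Finite) : ConvergesOn A B S M := by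
  have key : ∀ C : ℕ → Set X, ∀ x, {n ∈ M | x ∈ C n} ⊆ {n ∈ M' | x ∈ C n} ∪ (M \ M') :=
    fun C x n ⟨hnM, hnC⟩ => (em (n ∈ M')).imp (fun h' => ⟨h', hnC⟩) fun h' => ⟨hnM, h'⟩
  exact fun x hx => (h x hx).imp (fun hA => (hA.union hM).subset (key A x))
    fun hB => (hB.union hM).subset (key B x)

theorem ConvergesOn.not_frequently_and {φ : ℕ → ℕ} (h : ConvergesOn A B S (range φ))
    (hφ : φ.Injective) {x : X} (hx : x ∈ S) :
    ¬ ((∃ᶠ k in atTop, x ∈ A (φ k)) ∧ ∃ᶠ k in atTop, x ∈ B (φ k)) := by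
  simp only [Nat.frequently_atTop_iff_infinite]
  rintro ⟨hA, hB⟩
  rcases h x hx with hfin | hfin
  · exact hA ((hfin.preimage hφ.injOn).subset fun k hk => ⟨mem_range_self k, hk⟩)
  · exact hB ((hfin.preimage hφ.injOn).subset fun k hk => ⟨mem_range_self k, hk⟩)

theorem DivergesHereditarily.nonempty (h : DivergesHereditarily A B S M) (hM : M.Infinite) :
    S.Nonempty :=
  let ⟨x, hx, _⟩ := not_convergesOn_iff.1 (h M subset_rfl hM)
  ⟨x, hx⟩

theorem not_forall_divergesHereditarily_of_isFusionSeq {𝒮 : Finset (Set X)} {N : ℕ → Set ℕ}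
    {n : ℕ → ℕ} (hfus : IsFusionSeq N n) (S : ℕ → Set X) (hS : ∀ k, S k ∈ 𝒮) (c : ℕ → Bool)
    (hconv : ∀ k, ConvergesOn A B (S k ∩ bif c k then A (n k) else B (n k)) (N (k + 1))) :
    ∃ T ∈ 𝒮, ¬ DivergesHereditarily A B T (N 0) := by
  -- Some `(T, b)` equals `(S k, c k)` for infinitely many `k`; divergence of `T` along those `n k`
  -- gives a point of some `T ∩ bif b then A (n k) else B (n k)`, which converges along the tail.
  obtain ⟨⟨⟨T, hT⟩, b⟩, hJ⟩ := Finite.exists_infinite_fiber fun k => ((⟨S k, hS k⟩ : 𝒮), c k)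
  refine ⟨T, hT, fun hdiv => ?_⟩
  set J := (fun k => ((⟨S k, hS k⟩ : 𝒮), c k)) ⁻¹' {(⟨T, hT⟩, b)}
  have hJinf : (n '' J).Infinite :=
    (Set.infinite_coe_iff.1 hJ).image hfus.strictMono.injective.injOn
  have hJN : n '' J ⊆ N 0 := image_subset_iff.2 fun k _ => hfus.antitone (Nat.zero_le k) (hfus k).1
  obtain ⟨x, hxT, hxA, hxB⟩ := not_convergesOn_iff.1 (hdiv _ hJN hJinf)
  have hside : {m ∈ n '' J | x ∈ bif b then A m else B m}.Infinite := by cases b <;> assumption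
  obtain ⟨_, ⟨k, hkJ, rfl⟩, hxk⟩ := hside.nonempty
  simp only [J, mem_preimage, mem_singleton_iff, Prod.mk.injEq, Subtype.mk.injEq] at hkJ
  have hconvJ := (hconv k).of_finite_diff
    ((hfus.finite_range_diff (k + 1)).subset (sdiff_subset_sdiff_left (image_subset_range n J)))
  rw [hkJ.1, hkJ.2] at hconvJ
  rcases hconvJ x ⟨hxT, hxk⟩ with hfin | hfin
  exacts [hxA hfin, hxB hfin]

theorem DivergesHereditarily.exists_split {𝒮 : Finset (Set X)} (hM : M.Infinite)
    (h𝒮 : ∀ S ∈ 𝒮, DivergesHereditarily A B S M) :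
    ∃ n ∈ M, ∃ M' ⊆ M \ Iic n, M'.Infinite ∧ ∀ S ∈ 𝒮,
      DivergesHereditarily A B (S ∩ A n) M' ∧ DivergesHereditarily A B (S ∩ B n) M' := by
  by_contra hcon
  have step : ∀ N ⊆ M, N.Infinite → ∃ n ∈ N, ∃ N' ⊆ N \ Iic n, N'.Infinite ∧
      ∃ S ∈ 𝒮, ∃ c : Bool, ConvergesOn A B (S ∩ bif c then A n else B n) N' := by
    intro N hNM hN
    obtain ⟨n, hn⟩ := hN.nonempty
    have hfail : ¬ ∀ S ∈ 𝒮, DivergesHereditarily A B (S ∩ A n) (N \ Iic n) ∧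
        DivergesHereditarily A B (S ∩ B n) (N \ Iic n) := fun h =>
      hcon ⟨n, hNM hn, _, sdiff_subset_sdiff_left hNM, hN.sdiff (finite_Iic n), h⟩
    simp only [not_forall, not_and_or, not_divergesHereditarily_iff, exists_prop] at hfail
    obtain ⟨S, hS, ⟨N', hN', hinf, hconv⟩ | ⟨N', hN', hinf, hconv⟩⟩ := hfail
    exacts [⟨n, hn, N', hN', hinf, S, hS, true, hconv⟩, ⟨n, hn, N', hN', hinf, S, hS, false, hconv⟩]
  obtain ⟨N, hN0, hN⟩ := exists_seq_of_forall_exists_succ (p := fun _ N => N ⊆ M ∧ N.Infinite)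
    (r := fun _ N N' => ∃ n ∈ N, N' ⊆ N \ Iic n ∧
      ∃ S ∈ 𝒮, ∃ c : Bool, ConvergesOn A B (S ∩ bif c then A n else B n) N')
    ⟨subset_rfl, hM⟩ fun _ N ⟨hNM, hN⟩ => by
      obtain ⟨n, hn, N', hN', hinf, hconv⟩ := step N hNM hN
      exact ⟨N', ⟨(hN'.trans sdiff_subset).trans hNM, hinf⟩, n, hn, hN', hconv⟩
  choose n hn hsub S hS c hconv using fun k => (hN k).2
  obtain ⟨T, hT, hT'⟩ :=
    not_forall_divergesHereditarily_of_isFusionSeq (fun k => ⟨hn k, hsub k⟩) S hS c hconv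
  exact hT' (hN0 ▸ h𝒮 T hT)

theorem exists_mem_of_splitting {𝒮 : ℕ → Set (Set X)} {n : ℕ → ℕ} (h0 : univ ∈ 𝒮 0)
    (hsplit : ∀ k, ∀ S ∈ 𝒮 k, S ∩ A (n k) ∈ 𝒮 (k + 1) ∧ S ∩ B (n k) ∈ 𝒮 (k + 1))
    (P : Finset ℕ) (k : ℕ) :
    ∃ S ∈ 𝒮 k, ∀ x ∈ S, ∀ i < k, (i ∈ P → x ∈ A (n i)) ∧ (i ∉ P → x ∈ B (n i)) := by
  induction k with
  | zero => exact ⟨univ, h0, fun _ _ _ hi => absurd hi (Nat.not_lt_zero _)⟩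
  | succ k ih =>
    obtain ⟨S, hS, hSP⟩ := ih
    have hcell : ∀ C, (k ∈ P → C ⊆ A (n k)) → (k ∉ P → C ⊆ B (n k)) →
        ∀ x ∈ S ∩ C, ∀ i < k + 1, (i ∈ P → x ∈ A (n i)) ∧ (i ∉ P → x ∈ B (n i)) := by
      rintro C hCA hCB x ⟨hxS, hxC⟩ i hi
      rcases Nat.lt_succ_iff_lt_or_eq.1 hi with hi | rfl
      · exact hSP x hxS i hi
      · exact ⟨fun h => hCA h hxC, fun h => hCB h hxC⟩
    by_cases hk : k ∈ P
    · exact ⟨_, (hsplit k S hS).1, hcell _ (fun _ => subset_rfl) fun h => absurd hk h⟩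
    · exact ⟨_, (hsplit k S hS).2, hcell _ (fun h => absurd h hk) fun _ => subset_rfl⟩

theorem DivergesHereditarily.exists_isIndependent (hM : M.Infinite)
    (h : DivergesHereditarily A B univ M) :
    ∃ φ : ℕ → ℕ, StrictMono φ ∧ IsIndependent (A ∘ φ) (B ∘ φ) := by
  classical
  obtain ⟨s, hs0, hs⟩ := exists_seq_of_forall_exists_succ
    (p := fun _ (𝒮N : Finset (Set X) × Set ℕ) =>
      𝒮N.2.Infinite ∧ ∀ S ∈ 𝒮N.1, DivergesHereditarily A B S 𝒮N.2)
    (r := fun _ 𝒮N 𝒮N' => ∃ n ∈ 𝒮N.2, 𝒮N'.2 ⊆ 𝒮N.2 \ Iic n ∧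
      ∀ S ∈ 𝒮N.1, S ∩ A n ∈ 𝒮N'.1 ∧ S ∩ B n ∈ 𝒮N'.1)
    (a := ({univ}, M)) ⟨hM, by simpa using h⟩ fun _ ⟨𝒮, N⟩ ⟨hN, h𝒮⟩ => by
      obtain ⟨n, hn, N', hN', hinf, hsplit⟩ := DivergesHereditarily.exists_split hN h𝒮
      refine ⟨(𝒮.image (· ∩ A n) ∪ 𝒮.image (· ∩ B n), N'), ⟨hinf, ?_⟩, n, hn, hN', fun S hS => ?_⟩
      · simp only [Finset.mem_union, Finset.mem_image]
        rintro _ (⟨S, hS, rfl⟩ | ⟨S, hS, rfl⟩)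
        exacts [(hsplit S hS).1, (hsplit S hS).2]
      · simp only [Finset.mem_union, Finset.mem_image]
        exact ⟨Or.inl ⟨S, hS, rfl⟩, Or.inr ⟨S, hS, rfl⟩⟩
  choose n hn hsub hsplit using fun k => (hs k).2
  have hcell := exists_mem_of_splitting (𝒮 := fun k => ((s k).1 : Set (Set X)))
    (by simp [hs0]) hsplit
  refine ⟨n, IsFusionSeq.strictMono (N := fun k => (s k).2) fun k => ⟨hn k, hsub k⟩,
    fun P Q hPQ => ?_⟩
  obtain ⟨k, hk⟩ := (P ∪ Q).exists_nat_subset_range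
  have hlt : ∀ i ∈ P ∪ Q, i < k := fun i hi => Finset.mem_range.1 (hk hi)
  obtain ⟨S, hS, hSP⟩ := hcell P k
  obtain ⟨x, hx⟩ := ((hs k).1.2 S hS).nonempty (hs k).1.1
  exact ⟨x, fun i hi => (hSP x hx i (hlt i (Finset.mem_union_left _ hi))).1 hi,
    fun i hi => (hSP x hx i (hlt i (Finset.mem_union_right _ hi))).2
      (Finset.disjoint_right.1 hPQ hi)⟩

theorem exists_convergesOn_or_isIndependent (A B : ℕ → Set X) (hM : M.Infinite) :
    (∃ M' ⊆ M, M'.Infinite ∧ ConvergesOn A B univ M') ∨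
      ∃ φ : ℕ → ℕ, StrictMono φ ∧ IsIndependent (A ∘ φ) (B ∘ φ) := by
  by_cases h : DivergesHereditarily A B univ M
  · exact Or.inr (h.exists_isIndependent hM)
  · exact Or.inl (not_divergesHereditarily_iff.1 h)

end PairsOfSets

theorem exists_strictMono_forall_range {P : ℕ → Set ℕ → Prop}
    (hdense : ∀ k M, M.Infinite → ∃ M' ⊆ M, M'.Infinite ∧ P k M')
    (hcofinite : ∀ k M M', P k M' → (M \ M').Finite → P k M) :
    ∃ φ : ℕ → ℕ, StrictMono φ ∧ ∀ k, P k (range φ) := by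
  obtain ⟨N, -, hN⟩ := exists_seq_of_forall_exists_succ (p := fun _ N => N.Infinite)
    (r := fun k N N' => ∃ n ∈ N, N' ⊆ N \ Iic n ∧ P k N') infinite_univ fun k N hN => by
      obtain ⟨n, hn⟩ := hN.nonempty
      obtain ⟨N', hN', hinf, hP⟩ := hdense k _ (hN.sdiff (finite_Iic n))
      exact ⟨N', hinf, n, hn, hN', hP⟩
  choose n hn hsub hP using fun k => (hN k).2
  have hfus : IsFusionSeq N n := fun k => ⟨hn k, hsub k⟩
  exact ⟨n, hfus.strictMono, fun k => hcofinite k _ _ (hP k) (hfus.finite_range_diff _)⟩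

theorem exists_tendsto_of_forall_convergesOn {X : Type*} {g : ℕ → X → ℝ} {C : ℝ}
    (hC : ∀ n x, |g n x| ≤ C) {φ : ℕ → ℕ} (hφ : φ.Injective)
    (hconv : ∀ a b : ℚ, a < b →
      ConvergesOn (fun n => {x | g n x < a}) (fun n => {x | b < g n x}) univ (range φ)) :
    ∃ h : X → ℝ, ∀ x, Tendsto (fun n => g (φ n) x) atTop (𝓝 (h x)) := by
  have hlim : ∀ x, ∃ c, Tendsto (fun n => g (φ n) x) atTop (𝓝 c) := fun x =>
    tendsto_of_no_upcrossings Rat.denseRange_cast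
      (by
        rintro _ ⟨a, rfl⟩ _ ⟨b, rfl⟩ hab
        exact (hconv a b (by exact_mod_cast hab)).not_frequently_and hφ (mem_univ x))
      (isBoundedUnder_of ⟨C, fun n => (abs_le.1 (hC _ x)).2⟩)
      (isBoundedUnder_of ⟨-C, fun n => (abs_le.1 (hC _ x)).1⟩)
  choose h hh using hlim
  exact ⟨h, hh⟩

theorem pointwise_convergent_subseq_of_no_indep_general {X : Type*} (F : Set (X → ℝ)) (C : ℝ)
    (hbd : ∀ f ∈ F, ∀ x, |f x| ≤ C)
    (hni : ¬ ∃ g : ℕ → X → ℝ, (∀ n, g n ∈ F) ∧ IndepSeq g) :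
    ∀ g : ℕ → X → ℝ, (∀ n, g n ∈ F) →
      ∃ φ : ℕ → ℕ, StrictMono φ ∧
        ∃ h : X → ℝ, ∀ x, Tendsto (fun n => g (φ n) x) atTop (𝓝 (h x)) := by
  intro g hg
  let Q := {q : ℚ × ℚ // q.1 < q.2}
  have : Nonempty Q := ⟨⟨(0, 1), zero_lt_one⟩⟩
  obtain ⟨e, he⟩ := exists_surjective_nat Q
  let A : Q → ℕ → Set X := fun q n => {x | g n x < q.1.1}
  let B : Q → ℕ → Set X := fun q n => {x | q.1.2 < g n x}
  have hdense : ∀ q M, M.Infinite → ∃ M' ⊆ M, M'.Infinite ∧ ConvergesOn (A q) (B q) univ M' :=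
    fun q M hM => (exists_convergesOn_or_isIndependent (A q) (B q) hM).resolve_right
      fun ⟨φ, _, hind⟩ => hni ⟨g ∘ φ, fun n => hg _, q.1.1, q.1.2, by exact_mod_cast q.2, hind⟩
  obtain ⟨φ, hφ, hconv⟩ := exists_strictMono_forall_range
    (P := fun k => ConvergesOn (A (e k)) (B (e k)) univ) (fun k => hdense (e k))
    fun _ _ _ h => h.of_finite_diff
  refine ⟨φ, hφ, exists_tendsto_of_forall_convergesOn (fun n => hbd _ (hg n)) hφ.injective
    fun a b hab => ?_⟩
  obtain ⟨k, hk⟩ := he ⟨(a, b), hab⟩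
  have hconvk := hconv k
  rwa [hk] at hconvk

/-- Rosenthal's lemma (one direction): a uniformly bounded family of continuous
functions on a compact space containing no independent sequence has the property
that every sequence in it admits a pointwise convergent subsequence. -/
theorem pointwise_convergent_subseq_of_no_indep {X : Type*} [TopologicalSpace X]
    [CompactSpace X] (F : Set (X → ℝ)) (C : ℝ)
    (hcont : ∀ f ∈ F, Continuous f)
    (hbd : ∀ f ∈ F, ∀ x, |f x| ≤ C)
    (hni : ¬ ∃ g : ℕ → X → ℝ, (∀ n, g n ∈ F) ∧ IndepSeq g) :
    ∀ g : ℕ → X → ℝ, (∀ n, g n ∈ F) →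
      ∃ φ : ℕ → ℕ, StrictMono φ ∧
        ∃ h : X → ℝ, ∀ x, Tendsto (fun n => g (φ n) x) atTop (𝓝 (h x)) :=
  pointwise_convergent_subseq_of_no_indep_general F C hbd hni
end

section
/- Let M be a Banach space and φ(x,y) = ‖x+y‖. If φ is stable on M, i.e. for all bounded sequences (a_n), (b_m) in M the iterated limits lim_n lim_m ‖a_n + b_m‖ and lim_m lim_n ‖a_n + b_m‖ agree whenever both exist, then φ has NIP on M: no sequence (a_n) in M admits r > s such that for all finite disjoint P, Q ⊆ ℕ there exists b ∈ M with ‖a_n + b‖ ≤ s for n ∈ P and ‖a_n + b‖ ≥ r for n ∈ Q. -/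
/-!
This is the usual "stable implies NIP" argument, which works for any formula `φ(x, y)` with
values in a compact set; here `φ(x, y) = ‖x + y‖` on the unit ball, with values in `[0, 2]`.
Suppose `φ(a n, y)` has the independence property with gap `s < r`. After passing to a
subsequence of `(a n)` along which `φ(a n, w)` converges for each of the countably many
witnesses `w`, let `b k` witness "the first `k + 1` even terms small, the first `k + 1` odd terms
large". In the array `φ(a i, b k)` each column `k` tends to some `ψ k` as `i → ∞`, along even
and odd rows alike, while the limits along the rows are `≤ s` for even `i` and `≥ r` for odd `i`. After a further diagonal extraction the
double limit condition, applied once to the even rows and once to the odd rows, identifies both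
iterated limits with `lim ψ`, forcing `r ≤ s`.
-/

open Filter Topology

section DiagonalExtraction

variable {ι X : Type*} [Countable ι] [TopologicalSpace X] [FirstCountableTopology X]

theorem exists_strictMono_forall_tendsto_of_isCompact {K : Set X} (hK : IsCompact K)
    {F : ι → ℕ → X} (hF : ∀ j n, F j n ∈ K) :
    ∃ θ : ℕ → ℕ, StrictMono θ ∧ ∃ L : ι → X, (∀ j, L j ∈ K) ∧
      ∀ j, Tendsto (fun n => F j (θ n)) atTop (𝓝 (L j)) := by
  obtain ⟨L, hLK, θ, hθ, hL⟩ :=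
    (isCompact_univ_pi fun _ : ι => hK).tendsto_subseq (x := fun n j => F j n)
      fun n j _ => hF j n
  exact ⟨θ, hθ, L, fun j => hLK j (Set.mem_univ j), tendsto_pi_nhds.mp hL⟩

end DiagonalExtraction

section StableFormula

variable {A B : Type*}

def IsStable (φ : A → B → ℝ) : Prop :=
  ∀ (a : ℕ → A) (b : ℕ → B) (c d : ℕ → ℝ) (u v : ℝ),
    (∀ n, Tendsto (fun m => φ (a n) (b m)) atTop (𝓝 (c n))) → Tendsto c atTop (𝓝 u) →
    (∀ m, Tendsto (fun n => φ (a n) (b m)) atTop (𝓝 (d m))) → Tendsto d atTop (𝓝 v) → u = v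

def HasIndependenceProperty (φ : A → B → ℝ) : Prop :=
  ∃ (a : ℕ → A) (r s : ℝ), s < r ∧ ∀ P Q : Finset ℕ, Disjoint P Q →
    ∃ b : B, (∀ n ∈ P, φ (a n) b ≤ s) ∧ ∀ n ∈ Q, r ≤ φ (a n) b

variable {φ : A → B → ℝ}

theorem IsStable.eq_of_tendsto_comp (hφ : IsStable φ) {a : ℕ → A} {b : ℕ → B}
    {ψ c : ℕ → ℝ} {u v : ℝ} {β : ℕ → ℕ} (hβ : StrictMono β)
    (hrow : ∀ k, Tendsto (fun i => φ (a i) (b k)) atTop (𝓝 (ψ k)))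
    (hψ : Tendsto ψ atTop (𝓝 v))
    (hcol : ∀ j, Tendsto (fun k => φ (a j) (b k)) atTop (𝓝 (c j)))
    (hc : Tendsto (fun i => c (β i)) atTop (𝓝 u)) : u = v :=
  hφ (fun i => a (β i)) b _ ψ u v (fun i => hcol (β i)) hc
    (fun k => (hrow k).comp hβ.tendsto_atTop) hψ

theorem IsStable.le_of_alternating (hφ : IsStable φ) {K : Set ℝ} (hK : IsCompact K)
    (hφK : ∀ x y, φ x y ∈ K) {a : ℕ → A} {b : ℕ → B} {ψ : ℕ → ℝ} {r s : ℝ}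
    (hrow : ∀ k, Tendsto (fun i => φ (a i) (b k)) atTop (𝓝 (ψ k)))
    (hs : ∀ i k, i ≤ k → φ (a (2 * i)) (b k) ≤ s)
    (hr : ∀ i k, i ≤ k → r ≤ φ (a (2 * i + 1)) (b k)) : r ≤ s := by
  have hψK : ∀ k, ψ k ∈ K := fun k =>
    hK.isClosed.mem_of_tendsto (hrow k) (Eventually.of_forall fun i => hφK _ _)
  obtain ⟨θ, hθ, L, hLK, hL⟩ := exists_strictMono_forall_tendsto_of_isCompact hK
    (F := fun (j : Option ℕ) k => j.elim (ψ k) fun j => φ (a j) (b k))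
    fun j k => by cases j <;> simp [hψK, hφK]
  set c : ℕ → ℝ := fun j => L (some j)
  have hcol : ∀ j, Tendsto (fun k => φ (a j) (b (θ k))) atTop (𝓝 (c j)) := fun j => hL (some j)
  have hcs : ∀ i, c (2 * i) ≤ s := fun i =>
    le_of_tendsto (hcol _) <| (eventually_ge_atTop i).mono fun k hk =>
      hs i _ (hk.trans hθ.le_apply)
  have hcr : ∀ i, r ≤ c (2 * i + 1) := fun i =>
    ge_of_tendsto (hcol _) <| (eventually_ge_atTop i).mono fun k hk =>
      hr i _ (hk.trans hθ.le_apply)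
  obtain ⟨u, -, βe, hβe, hu⟩ := hK.tendsto_subseq fun i => hLK (some (2 * i))
  obtain ⟨u', -, βo, hβo, hu'⟩ := hK.tendsto_subseq fun i => hLK (some (2 * i + 1))
  have hrow' : ∀ k, Tendsto (fun i => φ (a i) (b (θ k))) atTop (𝓝 (ψ (θ k))) :=
    fun k => hrow (θ k)
  have huv : u = L none := hφ.eq_of_tendsto_comp (β := fun i => 2 * βe i)
    (fun _ _ h => by simpa using hβe h) hrow' (hL none) hcol hu
  have hu'v : u' = L none := hφ.eq_of_tendsto_comp (β := fun i => 2 * βo i + 1)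
    (fun _ _ h => by simpa using hβo h) hrow' (hL none) hcol hu'
  have hus : u ≤ s := le_of_tendsto hu (Eventually.of_forall fun i => hcs (βe i))
  have hru' : r ≤ u' := ge_of_tendsto hu' (Eventually.of_forall fun i => hcr (βo i))
  linarith

theorem IsStable.not_hasIndependenceProperty (hφ : IsStable φ) {K : Set ℝ} (hK : IsCompact K)
    (hφK : ∀ x y, φ x y ∈ K) : ¬ HasIndependenceProperty φ := by
  rintro ⟨a, r, s, hsr, hIP⟩
  choose w hws hwr using
    fun p : {p : Finset ℕ × Finset ℕ // Disjoint p.1 p.2} => hIP p.1.1 p.1.2 p.2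
  obtain ⟨α, hα, Ψ, -, hΨ⟩ := exists_strictMono_forall_tendsto_of_isCompact hK
    (F := fun p n => φ (a n) (w p)) fun _ _ => hφK _ _
  let P (k : ℕ) : Finset ℕ := (Finset.range (k + 1)).image fun i => α (2 * i)
  let Q (k : ℕ) : Finset ℕ := (Finset.range (k + 1)).image fun i => α (2 * i + 1)
  have hPQ (k : ℕ) : Disjoint (P k) (Q k) := by
    simp only [P, Q, Finset.disjoint_left, Finset.mem_image, Finset.mem_range]
    rintro _ ⟨i, -, rfl⟩ ⟨j, -, hj⟩
    have := hα.injective hj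
    omega
  let b (k : ℕ) := w ⟨(P k, Q k), hPQ k⟩
  refine not_le_of_gt hsr <| hφ.le_of_alternating hK hφK (a := fun i => a (α i)) (b := b)
    (fun k => hΨ _) (fun i k hik => hws _ _ ?_) (fun i k hik => hwr _ _ ?_)
  · exact Finset.mem_image_of_mem _ (Finset.mem_range.mpr (Nat.lt_succ_of_le hik))
  · exact Finset.mem_image_of_mem _ (Finset.mem_range.mpr (Nat.lt_succ_of_le hik))

end StableFormula

theorem stable_implies_NIP_general {M : Type*} [NormedAddCommGroup M]
    (hstable : ∀ a b : ℕ → M, (∀ n, ‖a n‖ ≤ 1) → (∀ m, ‖b m‖ ≤ 1) →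
      ∀ (c d : ℕ → ℝ) (u v : ℝ),
        (∀ n, Tendsto (fun m => ‖a n + b m‖) atTop (𝓝 (c n))) →
        Tendsto c atTop (𝓝 u) →
        (∀ m, Tendsto (fun n => ‖a n + b m‖) atTop (𝓝 (d m))) →
        Tendsto d atTop (𝓝 v) → u = v) :
    ¬ ∃ (a : ℕ → M) (r s : ℝ), (∀ n, ‖a n‖ ≤ 1) ∧ s < r ∧
      ∀ P Q : Finset ℕ, Disjoint P Q →
        ∃ b : M, ‖b‖ ≤ 1 ∧ (∀ n ∈ P, ‖a n + b‖ ≤ s) ∧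
          (∀ n ∈ Q, r ≤ ‖a n + b‖) := by
  let φ (x y : Metric.closedBall (0 : M) 1) : ℝ := ‖(x : M) + y‖
  have hφK (x y) : φ x y ∈ Set.Icc (0 : ℝ) 2 := by
    have := norm_add_le (x : M) y
    have := mem_closedBall_zero_iff.mp x.2
    have := mem_closedBall_zero_iff.mp y.2
    exact ⟨norm_nonneg _, by linarith⟩
  have hφ : IsStable φ := fun a b =>
    hstable _ _ (fun n => mem_closedBall_zero_iff.mp (a n).2)
      (fun m => mem_closedBall_zero_iff.mp (b m).2)
  rintro ⟨a, r, s, ha, hsr, hIP⟩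
  refine hφ.not_hasIndependenceProperty isCompact_Icc hφK
    ⟨fun n => ⟨a n, mem_closedBall_zero_iff.mpr (ha n)⟩, r, s, hsr, fun P Q hPQ => ?_⟩
  obtain ⟨b, hb, hbP, hbQ⟩ := hIP P Q hPQ
  exact ⟨⟨b, mem_closedBall_zero_iff.mpr hb⟩, hbP, hbQ⟩

/-- If `φ(x,y) = ‖x+y‖` is stable on a Banach space `M` (double limit
condition on the unit ball), then `φ` has NIP on `M`. -/
theorem stable_implies_NIP {M : Type*} [NormedAddCommGroup M]
    [NormedSpace ℝ M] [CompleteSpace M]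
    (hstable : ∀ a b : ℕ → M, (∀ n, ‖a n‖ ≤ 1) → (∀ m, ‖b m‖ ≤ 1) →
      ∀ (c d : ℕ → ℝ) (u v : ℝ),
        (∀ n, Tendsto (fun m => ‖a n + b m‖) atTop (𝓝 (c n))) →
        Tendsto c atTop (𝓝 u) →
        (∀ m, Tendsto (fun n => ‖a n + b m‖) atTop (𝓝 (d m))) →
        Tendsto d atTop (𝓝 v) → u = v) :
    ¬ ∃ (a : ℕ → M) (r s : ℝ), (∀ n, ‖a n‖ ≤ 1) ∧ s < r ∧
      ∀ P Q : Finset ℕ, Disjoint P Q →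
        ∃ b : M, ‖b‖ ≤ 1 ∧ (∀ n ∈ P, ‖a n + b‖ ≤ s) ∧
          (∀ n ∈ Q, r ≤ ‖a n + b‖) :=
  stable_implies_NIP_general hstable
end

section
/- If a Banach space X contains an isometric copy of c₀, then the formula φ(x,y) = ‖x+y‖ has the independence property on X: there exist a sequence (a_n) in the unit ball of X and reals s = 1 < r = 2 such that for all finite disjoint P, Q ⊆ ℕ there is b in the unit ball with ‖a_n + b‖ ≤ 1 for n ∈ P and ‖a_n + b‖ ≥ 2 for n ∈ Q. -/
open Filter Topology ZeroAtInfty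

noncomputable def indC0 (Q : Finset ℕ) : C₀(ℕ, ℝ) :=
  { toFun := fun m => if m ∈ Q then (1 : ℝ) else 0
    continuous_toFun := continuous_of_discreteTopology
    zero_at_infty' := by
      rw [cocompact_eq_cofinite]
      apply tendsto_nhds_of_eventually_eq
      filter_upwards [Q.eventually_cofinite_notMem] with m hm
      simp [hm] }

lemma indC0_apply (Q : Finset ℕ) (m : ℕ) :
    indC0 Q m = if m ∈ Q then (1 : ℝ) else 0 := rfl

lemma norm_indC0_le (Q : Finset ℕ) : ‖indC0 Q‖ ≤ 1 := by
  rw [← ZeroAtInftyContinuousMap.norm_toBCF_eq_norm]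
  apply BoundedContinuousFunction.norm_le (by norm_num) |>.mpr
  intro m
  simp only [ZeroAtInftyContinuousMap.toBCF_apply, indC0_apply]
  split <;> simp

lemma indC0_add_of_disjoint {P Q : Finset ℕ} (h : Disjoint P Q) :
    indC0 P + indC0 Q = indC0 (P ∪ Q) := by
  ext m
  have : m ∉ P ∨ m ∉ Q := by
    by_contra! hm
    exact Finset.disjoint_left.mp h hm.1 hm.2
  rcases this with hm | hm <;> simp [indC0_apply, hm]

lemma norm_indC0_add_le_one_of_disjoint {P Q : Finset ℕ} (h : Disjoint P Q) :
    ‖indC0 P + indC0 Q‖ ≤ 1 := by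
  rw [indC0_add_of_disjoint h]
  exact norm_indC0_le _

lemma two_le_norm_indC0_add {P Q : Finset ℕ} {n : ℕ} (hP : n ∈ P) (hQ : n ∈ Q) :
    2 ≤ ‖indC0 P + indC0 Q‖ :=
  calc (2 : ℝ) = ‖(indC0 P + indC0 Q).toBCF n‖ := by
        norm_num [ZeroAtInftyContinuousMap.toBCF_apply, indC0_apply, hP, hQ]
    _ ≤ ‖(indC0 P + indC0 Q).toBCF‖ := BoundedContinuousFunction.norm_coe_le_norm _ n
    _ = ‖indC0 P + indC0 Q‖ := ZeroAtInftyContinuousMap.norm_toBCF_eq_norm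

theorem IP_of_c0_subspace_general {X : Type*} [NormedAddCommGroup X]
    [NormedSpace ℝ X]
    (T : C₀(ℕ, ℝ) →ₗᵢ[ℝ] X) :
    ∃ a : ℕ → X, (∀ n, ‖a n‖ ≤ 1) ∧
      ∀ P Q : Finset ℕ, Disjoint P Q →
        ∃ b : X, ‖b‖ ≤ 1 ∧ (∀ n ∈ P, ‖a n + b‖ ≤ 1) ∧
          (∀ n ∈ Q, 2 ≤ ‖a n + b‖) := by
  refine ⟨fun n => T (indC0 {n}), fun n => ?_, fun P Q hPQ => ⟨T (indC0 Q), ?_, ?_, ?_⟩⟩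
  · simpa only [T.norm_map] using norm_indC0_le {n}
  · simpa only [T.norm_map] using norm_indC0_le Q
  · intro n hn
    have hnQ : Disjoint {n} Q :=
      Finset.disjoint_singleton_left.mpr (Finset.disjoint_left.mp hPQ hn)
    simpa only [← T.map_add, T.norm_map] using norm_indC0_add_le_one_of_disjoint hnQ
  · intro n hn
    simpa only [← T.map_add, T.norm_map] using
      two_le_norm_indC0_add (Finset.mem_singleton_self n) hn

/-- If a Banach space contains an isometric copy of `c₀ = C₀(ℕ, ℝ)`, then the
formula `φ(x,y) = ‖x+y‖` has the independence property on it, with constants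
`s = 1 < r = 2`. -/
theorem IP_of_c0_subspace {X : Type*} [NormedAddCommGroup X]
    [NormedSpace ℝ X] [CompleteSpace X]
    (T : C₀(ℕ, ℝ) →ₗᵢ[ℝ] X) :
    ∃ a : ℕ → X, (∀ n, ‖a n‖ ≤ 1) ∧
      ∀ P Q : Finset ℕ, Disjoint P Q →
        ∃ b : X, ‖b‖ ≤ 1 ∧ (∀ n ∈ P, ‖a n + b‖ ≤ 1) ∧
          (∀ n ∈ Q, 2 ≤ ‖a n + b‖) :=
  IP_of_c0_subspace_general T
end

section
/- In c₀, let s_n = e_1 + ⋯ + e_n and ψ(x, y) = max(‖x + y‖, ‖x − y‖). Then ψ(x, s_m) ≤ ψ(x, s_n) for all x ∈ c₀ whenever m ≤ n, and ψ(e_n, s_m) < ψ(e_m, s_n) for all m < n; hence ψ witnesses the strict order property on c₀. -/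
/-!
Since `max (|a + b|) (|a - b|) = |a| + |b|` for reals, `ψ(x, y) = sup_k (|x k| + |y k|)` whenever
`x` and `y` are bounded (the boundedness matters: `⨆` of an unbounded family is junk). So `ψ(x, y)`
is monotone in `|y|` pointwise, which gives the first claim as `|s_m| ≤ |s_n|`; and for `m < n`
the supports of `e_n` and `s_m` are disjoint, so `ψ(e_n, s_m) ≤ 1`, while
`ψ(e_m, s_n) ≥ |e_m m| + |s_n m| = 2`.
-/

open Filter Topology

/-- The sup norm on real sequences. -/
noncomputable def supNorm (x : ℕ → ℝ) : ℝ := ⨆ k, |x k|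

/-- Membership in `c₀`: the sequence tends to `0`. -/
def memc0 (x : ℕ → ℝ) : Prop := Tendsto x atTop (𝓝 0)

/-- The standard unit vectors of `c₀` (`0`-indexed). -/
def stdBasis (n : ℕ) : ℕ → ℝ := fun k => if k = n then 1 else 0

/-- The summing basis: `sB n = e_0 + ⋯ + e_{n-1}`. -/
def sB (n : ℕ) : ℕ → ℝ := fun k => if k < n then 1 else 0

/-- `ψ(x,y) = max(‖x+y‖, ‖x−y‖)`. -/
noncomputable def psi (x y : ℕ → ℝ) : ℝ :=
  max (supNorm (fun k => x k + y k)) (supNorm (fun k => x k - y k))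

theorem max_abs_add_abs_sub {α : Type*} [AddCommGroup α] [LinearOrder α] [IsOrderedAddMonoid α]
    (a b : α) : max |a + b| |a - b| = |a| + |b| := by
  grind [abs_cases]

theorem memc0.bddAbove_abs {x : ℕ → ℝ} (hx : memc0 x) : BddAbove (Set.range fun k => |x k|) := by
  simpa using hx.abs.bddAbove_range

theorem psi_le {x y : ℕ → ℝ} {c : ℝ} (h : ∀ k, |x k| + |y k| ≤ c) : psi x y ≤ c :=
  max_le (ciSup_le fun k => (abs_add_le _ _).trans (h k))
    (ciSup_le fun k => (abs_sub _ _).trans (h k))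

theorem abs_add_abs_le_psi {x y : ℕ → ℝ} (hx : BddAbove (Set.range fun k => |x k|))
    (hy : BddAbove (Set.range fun k => |y k|)) (k : ℕ) : |x k| + |y k| ≤ psi x y := by
  obtain ⟨C, hC⟩ := hx
  obtain ⟨D, hD⟩ := hy
  have hbdd : BddAbove (Set.range fun k => |x k| + |y k|) :=
    ⟨C + D, by rintro - ⟨k, rfl⟩; exact add_le_add (hC ⟨k, rfl⟩) (hD ⟨k, rfl⟩)⟩
  rw [← max_abs_add_abs_sub]
  exact max_le_max
    (le_ciSup (hbdd.range_mono _ fun k => abs_add_le _ _) k)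
    (le_ciSup (hbdd.range_mono _ fun k => abs_sub _ _) k)

theorem abs_sB_le_one (n k : ℕ) : |sB n k| ≤ 1 := by
  unfold sB; split_ifs <;> norm_num

theorem abs_stdBasis_le_one (n k : ℕ) : |stdBasis n k| ≤ 1 := by
  unfold stdBasis; split_ifs <;> norm_num

theorem bddAbove_abs_sB (n : ℕ) : BddAbove (Set.range fun k => |sB n k|) :=
  ⟨1, Set.forall_mem_range.2 (abs_sB_le_one n)⟩

theorem bddAbove_abs_stdBasis (n : ℕ) : BddAbove (Set.range fun k => |stdBasis n k|) :=
  ⟨1, Set.forall_mem_range.2 (abs_stdBasis_le_one n)⟩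

theorem abs_sB_mono {m n : ℕ} (hmn : m ≤ n) (k : ℕ) : |sB m k| ≤ |sB n k| := by
  unfold sB; split_ifs <;> norm_num; omega

theorem abs_stdBasis_add_abs_sB_le_one {m n : ℕ} (hmn : m ≤ n) (k : ℕ) :
    |stdBasis n k| + |sB m k| ≤ 1 := by
  unfold stdBasis sB; split_ifs <;> norm_num; omega

/-- In `c₀`, `ψ(x, s_m) ≤ ψ(x, s_n)` for `m ≤ n`, and
`ψ(e_n, s_m) < ψ(e_m, s_n)` for `m < n`; so `ψ` witnesses the strict order
property on `c₀`. -/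
theorem psi_strict_order_property :
    (∀ x : ℕ → ℝ, memc0 x → ∀ m n : ℕ, m ≤ n → psi x (sB m) ≤ psi x (sB n)) ∧
    (∀ m n : ℕ, m < n → psi (stdBasis n) (sB m) < psi (stdBasis m) (sB n)) := by
  refine ⟨fun x hx m n hmn => psi_le fun k => ?_, fun m n hmn => ?_⟩
  · exact (add_le_add_right (abs_sB_mono hmn k) _).trans
      (abs_add_abs_le_psi hx.bddAbove_abs (bddAbove_abs_sB n) k)
  · calc psi (stdBasis n) (sB m) ≤ 1 := psi_le (abs_stdBasis_add_abs_sB_le_one hmn.le)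
      _ < |stdBasis m m| + |sB n m| := by norm_num [stdBasis, sB, hmn]
      _ ≤ psi (stdBasis m) (sB n) :=
        abs_add_abs_le_psi (bddAbove_abs_stdBasis m) (bddAbove_abs_sB n) m
end

section
/- The Tsirelson norm satisfies the implicit equation ‖x‖ = max(‖x‖_∞, sup{ (1/2)∑_{i=1}^k ‖E_i x‖ : (E_i)_{i=1}^k admissible }) for all x ∈ c₀₀, where ‖x‖ = lim_n ‖x‖_n is defined by the inductive construction. -/
open Filter Topology

/-- Restriction of a sequence to a finite set of coordinates. -/
def restr (E : Finset ℕ) (x : ℕ → ℝ) : ℕ → ℝ := fun k => if k ∈ E then x k else 0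

/-- `(E i)_{i < k}` is admissible: the sets are nonempty, `k ≤ min E 0`, and the
sets are successive (`max E i < min E (i+1)`). -/
def Admissible (E : ℕ → Finset ℕ) (k : ℕ) : Prop :=
  (∀ i < k, (E i).Nonempty) ∧ (0 < k → ∀ n ∈ E 0, k ≤ n) ∧
    ∀ i, i + 1 < k → ∀ a ∈ E i, ∀ b ∈ E (i + 1), a < b

/-- The Figiel–Johnson approximating norms: `‖x‖₀ = ‖x‖_∞` and
`‖x‖_{n+1} = max (‖x‖_n) (sup { (1/2) ∑ᵢ ‖Eᵢ x‖_n : (Eᵢ) admissible })`. -/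
noncomputable def tnorm : ℕ → (ℕ → ℝ) → ℝ
  | 0 => fun x => ⨆ k, |x k|
  | n + 1 => fun x =>
      max (tnorm n x)
        (sSup {r | ∃ (k : ℕ) (E : ℕ → Finset ℕ), Admissible E k ∧
          r = (1 / 2) * ∑ i ∈ Finset.range k, tnorm n (restr (E i) x)})

/-- The Tsirelson norm, as the limit (= supremum, by monotonicity) of the
approximating norms. -/
noncomputable def TNorm (x : ℕ → ℝ) : ℝ := ⨆ n, tnorm n x

/-! Every `‖·‖_n` is dominated by the `ℓ¹`-norm, by induction on `n`: admissible sets are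
pairwise disjoint, so an admissible sum of `ℓ¹`-norms of restrictions is at most `‖x‖₁`.
Hence on `c₀₀` the increasing sequence `‖x‖_n` converges to `‖x‖ = sup_n ‖x‖_n`. The two
sides of the implicit equation are compared through the recursion: `‖x‖_{n+1}` is bounded by
the right-hand side because `‖·‖_n ≤ ‖·‖`, and each admissible half-sum of `‖·‖` is the limit
of admissible half-sums of `‖·‖_n`, which are bounded by `‖x‖_{n+1} ≤ ‖x‖`. -/

open Finset

lemma restr_of_notMem {E : Finset ℕ} {j : ℕ} (x : ℕ → ℝ) (hj : j ∉ E) : restr E x j = 0 :=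
  if_neg hj

lemma restr_of_mem {E : Finset ℕ} {j : ℕ} (x : ℕ → ℝ) (hj : j ∈ E) : restr E x j = x j :=
  if_pos hj

namespace Admissible

variable {E : ℕ → Finset ℕ} {k : ℕ}

lemma zero (E : ℕ → Finset ℕ) : Admissible E 0 :=
  ⟨fun _ hi => absurd hi (Nat.not_lt_zero _), fun h => absurd h (lt_irrefl 0),
    fun _ hi => absurd hi (Nat.not_lt_zero _)⟩

lemma lt_of_lt (h : Admissible E k) {i j : ℕ} (hij : i < j) (hj : j < k) {a b : ℕ}
    (ha : a ∈ E i) (hb : b ∈ E j) : a < b := by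
  induction j generalizing b with
  | zero => exact absurd hij (Nat.not_lt_zero i)
  | succ j ih =>
    rcases (Nat.lt_succ_iff.mp hij).eq_or_lt with rfl | hij
    · exact h.2.2 i hj a ha b hb
    · obtain ⟨c, hc⟩ := h.1 j (by omega)
      exact (ih hij (by omega) hc).trans (h.2.2 j hj c hc b hb)

lemma pairwiseDisjoint (h : Admissible E k) : (range k : Set ℕ).PairwiseDisjoint E := by
  intro i hi j hj hij
  simp only [coe_range, Set.mem_Iio] at hi hj
  refine disjoint_left.mpr fun a hai haj => ?_
  rcases hij.lt_or_gt with hlt | hlt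
  · exact (h.lt_of_lt hlt hj hai haj).false
  · exact (h.lt_of_lt hlt hi haj hai).false

end Admissible

def admissibleHalfSums (F : (ℕ → ℝ) → ℝ) (x : ℕ → ℝ) : Set ℝ :=
  {r | ∃ (k : ℕ) (E : ℕ → Finset ℕ), Admissible E k ∧
    r = (1 / 2) * ∑ i ∈ range k, F (restr (E i) x)}

lemma zero_mem_admissibleHalfSums (F : (ℕ → ℝ) → ℝ) (x : ℕ → ℝ) :
    (0 : ℝ) ∈ admissibleHalfSums F x :=
  ⟨0, fun _ => ∅, Admissible.zero _, by simp⟩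

lemma tnorm_succ (n : ℕ) (x : ℕ → ℝ) :
    tnorm (n + 1) x = max (tnorm n x) (sSup (admissibleHalfSums (tnorm n) x)) := rfl

def BoundedByL1 (F : (ℕ → ℝ) → ℝ) : Prop :=
  ∀ (s : Finset ℕ) (y : ℕ → ℝ), (∀ j ∉ s, y j = 0) → F y ≤ ∑ j ∈ s, |y j|

namespace BoundedByL1

variable {F : (ℕ → ℝ) → ℝ} {s : Finset ℕ} {x : ℕ → ℝ}

lemma apply_restr_le (hF : BoundedByL1 F) (hs : ∀ j ∉ s, x j = 0) (E : Finset ℕ) :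
    F (restr E x) ≤ ∑ j ∈ s ∩ E, |x j| := by
  have hsupp : ∀ j ∉ s ∩ E, restr E x j = 0 := by
    intro j hj
    by_cases hjE : j ∈ E
    · rw [restr_of_mem x hjE, hs j fun hjs => hj (mem_inter.mpr ⟨hjs, hjE⟩)]
    · exact restr_of_notMem x hjE
  refine (hF _ _ hsupp).trans_eq (sum_congr rfl fun j hj => ?_)
  rw [restr_of_mem x (mem_inter.mp hj).2]

lemma half_sum_le (hF : BoundedByL1 F) (hs : ∀ j ∉ s, x j = 0) {E : ℕ → Finset ℕ} {k : ℕ}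
    (hE : Admissible E k) :
    (1 / 2) * ∑ i ∈ range k, F (restr (E i) x) ≤ ∑ j ∈ s, |x j| := by
  have hdisj : (range k : Set ℕ).PairwiseDisjoint fun i => s ∩ E i :=
    hE.pairwiseDisjoint.mono_on fun i _ => inter_subset_right
  have hsum : ∑ i ∈ range k, F (restr (E i) x) ≤ ∑ j ∈ s, |x j| :=
    calc ∑ i ∈ range k, F (restr (E i) x)
        ≤ ∑ i ∈ range k, ∑ j ∈ s ∩ E i, |x j| := sum_le_sum fun i _ => hF.apply_restr_le hs (E i)
      _ = ∑ j ∈ (range k).biUnion fun i => s ∩ E i, |x j| := (sum_biUnion hdisj).symm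
      _ ≤ ∑ j ∈ s, |x j| :=
        sum_le_sum_of_subset_of_nonneg (biUnion_subset.mpr fun _ _ => inter_subset_left)
          fun j _ _ => abs_nonneg (x j)
  have hnonneg : 0 ≤ ∑ j ∈ s, |x j| := sum_nonneg fun j _ => abs_nonneg (x j)
  linarith

lemma bddAbove_admissibleHalfSums (hF : BoundedByL1 F) (hs : ∀ j ∉ s, x j = 0) :
    BddAbove (admissibleHalfSums F x) :=
  ⟨∑ j ∈ s, |x j|, by rintro _ ⟨k, E, hE, rfl⟩; exact hF.half_sum_le hs hE⟩

lemma sSup_admissibleHalfSums_le (hF : BoundedByL1 F) (hs : ∀ j ∉ s, x j = 0) :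
    sSup (admissibleHalfSums F x) ≤ ∑ j ∈ s, |x j| :=
  csSup_le ⟨0, zero_mem_admissibleHalfSums F x⟩ fun _ ⟨_, _, hE, hr⟩ =>
    hr ▸ hF.half_sum_le hs hE

end BoundedByL1

lemma boundedByL1_tnorm (n : ℕ) : BoundedByL1 (tnorm n) := by
  induction n with
  | zero =>
    intro s x hs
    refine ciSup_le fun j => ?_
    by_cases hj : j ∈ s
    · exact single_le_sum (f := fun i => |x i|) (fun i _ => abs_nonneg (x i)) hj
    · rw [hs j hj, abs_zero]
      exact sum_nonneg fun i _ => abs_nonneg (x i)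
  | succ n ih =>
    intro s x hs
    exact max_le (ih s x hs) (ih.sSup_admissibleHalfSums_le hs)

lemma monotone_tnorm (x : ℕ → ℝ) : Monotone fun n => tnorm n x :=
  monotone_nat_of_le_succ fun _ => le_max_left _ _

section FiniteSupport

variable {s : Finset ℕ} {x : ℕ → ℝ}

lemma bddAbove_range_tnorm (hs : ∀ j ∉ s, x j = 0) : BddAbove (Set.range fun n => tnorm n x) :=
  ⟨∑ j ∈ s, |x j|, by rintro _ ⟨n, rfl⟩; exact boundedByL1_tnorm n s x hs⟩

lemma tendsto_tnorm (hs : ∀ j ∉ s, x j = 0) :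
    Tendsto (fun n => tnorm n x) atTop (𝓝 (TNorm x)) :=
  tendsto_atTop_ciSup (monotone_tnorm x) (bddAbove_range_tnorm hs)

lemma tnorm_le_TNorm (hs : ∀ j ∉ s, x j = 0) (n : ℕ) : tnorm n x ≤ TNorm x :=
  le_ciSup (bddAbove_range_tnorm hs) n

end FiniteSupport

lemma boundedByL1_TNorm : BoundedByL1 TNorm :=
  fun s _ hs => ciSup_le fun n => boundedByL1_tnorm n s _ hs

section ImplicitEquation

variable {s : Finset ℕ} {x : ℕ → ℝ}

lemma tnorm_le_max_sSup_admissibleHalfSums_TNorm (hs : ∀ j ∉ s, x j = 0) (n : ℕ) :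
    tnorm n x ≤ max (tnorm 0 x) (sSup (admissibleHalfSums TNorm x)) := by
  induction n with
  | zero => exact le_max_left _ _
  | succ n ih =>
    refine max_le ih (le_max_of_le_right (csSup_le ⟨0, zero_mem_admissibleHalfSums _ x⟩ ?_))
    rintro _ ⟨k, E, hE, rfl⟩
    refine le_trans ?_
      (le_csSup (boundedByL1_TNorm.bddAbove_admissibleHalfSums hs) ⟨k, E, hE, rfl⟩)
    gcongr with i
    exact tnorm_le_TNorm (fun _ => restr_of_notMem x) n

lemma sSup_admissibleHalfSums_TNorm_le (hs : ∀ j ∉ s, x j = 0) :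
    sSup (admissibleHalfSums TNorm x) ≤ TNorm x := by
  refine csSup_le ⟨0, zero_mem_admissibleHalfSums _ x⟩ ?_
  rintro _ ⟨k, E, hE, rfl⟩
  have hlim : Tendsto (fun n => (1 / 2 : ℝ) * ∑ i ∈ range k, tnorm n (restr (E i) x)) atTop
      (𝓝 ((1 / 2) * ∑ i ∈ range k, TNorm (restr (E i) x))) :=
    (tendsto_finsetSum _ fun i _ => tendsto_tnorm fun _ => restr_of_notMem x).const_mul _
  refine le_of_tendsto' hlim fun n => ?_
  calc (1 / 2 : ℝ) * ∑ i ∈ range k, tnorm n (restr (E i) x)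
      ≤ sSup (admissibleHalfSums (tnorm n) x) :=
        le_csSup ((boundedByL1_tnorm n).bddAbove_admissibleHalfSums hs) ⟨k, E, hE, rfl⟩
    _ ≤ tnorm (n + 1) x := le_max_right _ _
    _ ≤ TNorm x := tnorm_le_TNorm hs (n + 1)

lemma TNorm_eq_max (hs : ∀ j ∉ s, x j = 0) :
    TNorm x = max (tnorm 0 x) (sSup (admissibleHalfSums TNorm x)) :=
  le_antisymm (ciSup_le (tnorm_le_max_sSup_admissibleHalfSums_TNorm hs))
    (max_le (tnorm_le_TNorm hs 0) (sSup_admissibleHalfSums_TNorm_le hs))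

end ImplicitEquation

/-- The Tsirelson norm `‖x‖ = lim_n ‖x‖_n` satisfies the implicit equation
`‖x‖ = max (‖x‖_∞) (sup { (1/2) ∑ᵢ ‖Eᵢ x‖ : (Eᵢ) admissible })` on `c₀₀`. -/
theorem tsirelson_norm_implicit_equation :
    (∀ x : ℕ →₀ ℝ, Tendsto (fun n => tnorm n ⇑x) atTop (𝓝 (TNorm ⇑x))) ∧
    ∀ x : ℕ →₀ ℝ,
      TNorm ⇑x = max (⨆ k, |x k|)
        (sSup {r | ∃ (k : ℕ) (E : ℕ → Finset ℕ), Admissible E k ∧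
          r = (1 / 2) * ∑ i ∈ Finset.range k, TNorm (restr (E i) ⇑x)}) := by
  have hsupp (x : ℕ →₀ ℝ) : ∀ j ∉ x.support, x j = 0 := fun _ => Finsupp.notMem_support_iff.mp
  exact ⟨fun x => tendsto_tnorm (hsupp x), fun x => TNorm_eq_max (hsupp x)⟩
end

section
/- Let X be a compact Hausdorff space and F ⊆ C(X) a uniformly bounded set such that for all sequences (f_n) ⊆ F and all sequences (x_m) ⊆ X, lim_n lim_m f_n(x_m) = lim_m lim_n f_n(x_m) whenever both iterated limits exist. Then the pointwise limit of any pointwise convergent sequence from F is continuous. -/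
/-!
If `h = lim gₙ` were discontinuous at `x₀`, pick points `xₘ` with `|h xₘ - h x₀| ≥ ε` along which
every `gₖ` converges to `gₖ x₀`.
Passing to a subsequence on which `h xₘ → v` (boundedness), the double limit condition equates the
iterated limits `lim_k lim_m gₖ xₘ = h x₀` and `lim_m lim_k gₖ xₘ = v`, contradicting `|v - h x₀| ≥ ε`.
-/

open Filter Topology

theorem exists_seq_forall_tendsto_of_frequently {X Y ι : Type*} [TopologicalSpace X]
    [TopologicalSpace Y] [FirstCountableTopology Y] [Countable ι] {g : ι → X → Y} {x₀ : X}
    (hg : ∀ i, ContinuousAt (g i) x₀) {p : X → Prop} (hp : ∃ᶠ x in 𝓝 x₀, p x) :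
    ∃ x : ℕ → X, (∀ m, p (x m)) ∧ ∀ i, Tendsto (fun m => g i (x m)) atTop (𝓝 (g i x₀)) := by
  -- Sequences suffice in the product `ι → Y`, which is first countable as `ι` is countable.
  set G : X → ι → Y := fun x i => g i x
  have hG : G x₀ ∈ closure (G '' {x | p x}) :=
    (continuousAt_pi.2 hg).continuousWithinAt.mem_closure_image (mem_closure_iff_frequently.2 hp)
  obtain ⟨y, hy, hy_lim⟩ := mem_closure_iff_seq_limit.1 hG
  choose x hx hxy using hy
  refine ⟨x, hx, fun i => ?_⟩
  simp only [G, ← funext hxy] at hy_lim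
  exact tendsto_pi_nhds.1 hy_lim i

theorem continuousAt_of_seq_tendsto_of_isBounded {X Y Z ι : Type*} [TopologicalSpace X]
    [TopologicalSpace Y] [FirstCountableTopology Y] [PseudoMetricSpace Z] [ProperSpace Z]
    [Countable ι] {g : ι → X → Y} {h : X → Z} {x₀ : X} (hg : ∀ i, ContinuousAt (g i) x₀)
    (hh : Bornology.IsBounded (Set.range h))
    (H : ∀ (x : ℕ → X) (z : Z), (∀ i, Tendsto (fun m => g i (x m)) atTop (𝓝 (g i x₀))) →
      Tendsto (fun m => h (x m)) atTop (𝓝 z) → z = h x₀) :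
    ContinuousAt h x₀ := by
  rw [ContinuousAt, Metric.tendsto_nhds]
  by_contra! ⟨ε, hε, hfar⟩
  obtain ⟨x, hxε, hxg⟩ := exists_seq_forall_tendsto_of_frequently hg hfar
  obtain ⟨z, -, φ, hφ, hz⟩ := tendsto_subseq_of_bounded hh fun m => Set.mem_range_self (x m)
  have hz_eq : z = h x₀ := H (x ∘ φ) z (fun i => (hxg i).comp hφ.tendsto_atTop) hz
  have hz_far : ε ≤ dist z (h x₀) :=
    ge_of_tendsto (hz.dist tendsto_const_nhds) (Eventually.of_forall fun j => hxε (φ j))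
  rw [hz_eq, dist_self] at hz_far
  exact hε.not_ge hz_far

theorem continuous_pointwise_limit_of_double_limit_general {X : Type*}
    [TopologicalSpace X]
    (F : Set (X → ℝ)) (C : ℝ)
    (hcont : ∀ f ∈ F, Continuous f)
    (hbd : ∀ f ∈ F, ∀ x, |f x| ≤ C)
    (hdl : ∀ (f : ℕ → X → ℝ), (∀ n, f n ∈ F) → ∀ (x : ℕ → X)
      (c d : ℕ → ℝ) (u v : ℝ),
      (∀ n, Tendsto (fun m => f n (x m)) atTop (𝓝 (c n))) →
      Tendsto c atTop (𝓝 u) →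
      (∀ m, Tendsto (fun n => f n (x m)) atTop (𝓝 (d m))) →
      Tendsto d atTop (𝓝 v) → u = v) :
    ∀ g : ℕ → X → ℝ, (∀ n, g n ∈ F) →
      ∀ h : X → ℝ, (∀ x, Tendsto (fun n => g n x) atTop (𝓝 (h x))) →
        Continuous h := by
  intro g hg h hlim
  have hh : Bornology.IsBounded (Set.range h) := by
    refine isBounded_iff_forall_norm_le.2 ⟨C, Set.forall_mem_range.2 fun x => ?_⟩
    exact le_of_tendsto (hlim x).norm (Eventually.of_forall fun n => hbd _ (hg n) x)
  refine continuous_iff_continuousAt.2 fun x₀ =>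
    continuousAt_of_seq_tendsto_of_isBounded (fun n => (hcont _ (hg n)).continuousAt) hh ?_
  intro x v hx hv
  exact (hdl g hg x _ _ _ v hx (hlim x₀) (fun m => hlim (x m)) hv).symm

/-- Grothendieck double-limit step: if a uniformly bounded family of continuous
functions on a compact Hausdorff space satisfies the double limit condition,
then pointwise limits of sequences from the family are continuous. -/
theorem continuous_pointwise_limit_of_double_limit {X : Type*}
    [TopologicalSpace X] [CompactSpace X] [T2Space X]
    (F : Set (X → ℝ)) (C : ℝ)
    (hcont : ∀ f ∈ F, Continuous f)
    (hbd : ∀ f ∈ F, ∀ x, |f x| ≤ C)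
    (hdl : ∀ (f : ℕ → X → ℝ), (∀ n, f n ∈ F) → ∀ (x : ℕ → X)
      (c d : ℕ → ℝ) (u v : ℝ),
      (∀ n, Tendsto (fun m => f n (x m)) atTop (𝓝 (c n))) →
      Tendsto c atTop (𝓝 u) →
      (∀ m, Tendsto (fun n => f n (x m)) atTop (𝓝 (d m))) →
      Tendsto d atTop (𝓝 v) → u = v) :
    ∀ g : ℕ → X → ℝ, (∀ n, g n ∈ F) →
      ∀ h : X → ℝ, (∀ x, Tendsto (fun n => g n x) atTop (𝓝 (h x))) →
        Continuous h :=
  continuous_pointwise_limit_of_double_limit_general F C hcont hbd hdl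
end
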